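/- arXiv:1911.03816 — 2 statements merged into one kernel-verified Lean document; each statement's English description precedes it below -/
import Mathlib

section
/- Let 0 < α ≤ √2 − 1. Then any ℕ-valued random variable X satisfying the recursive distributional equation has E[X] = (1/2)(1 + α − √(1 − 2α − α²)), where E[X] := ∑_{k≥0} k·P(X = k). -/
open scoped ENNReal

/-- The Poisson(α) probability mass function on ℕ. -/
noncomputable def poissonPMF (α : ℝ) (k : ℕ) : ℝ≥0∞ :=
  ENNReal.ofReal (Real.exp (-α) * α ^ k / (Nat.factorial k))

/-- The Geometric(1/2) pmf: P(N = k) = (1/2)^(k+1) for k ≥ 0. -/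
noncomputable def geomHalf (k : ℕ) : ℝ≥0∞ := (1 / 2) ^ (k + 1)

/-- The law of (X - 1)⁺ when X has law μ on ℕ. -/
noncomputable def shiftLaw (μ : ℕ → ℝ≥0∞) (k : ℕ) : ℝ≥0∞ :=
  if k = 0 then μ 0 + μ 1 else μ (k + 1)

/-- Convolution of two (sub-)pmfs on ℕ: the law of an independent sum. -/
noncomputable def convAdd (f g : ℕ → ℝ≥0∞) (k : ℕ) : ℝ≥0∞ :=
  ∑ j ∈ Finset.range (k + 1), f j * g (k - j)

/-- n-fold convolution of a pmf on ℕ: the law of a sum of n i.i.d. copies. -/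
noncomputable def iterConv (f : ℕ → ℝ≥0∞) : ℕ → ℕ → ℝ≥0∞
  | 0 => fun k => if k = 0 then 1 else 0
  | n + 1 => convAdd (iterConv f n) f

/-- μ is the law of an ℕ-valued random variable X satisfying the RDE
    X =_d P + ∑_{i=1}^N (X_i - 1)⁺, with P ~ Poisson(α), N ~ Geom(1/2),
    X_i i.i.d. with law μ, all independent. -/
def SatisfiesRDE (α : ℝ) (μ : ℕ → ℝ≥0∞) : Prop :=
  (∑' k, μ k) = 1 ∧
  ∀ k, μ k = ∑' n, geomHalf n * convAdd (poissonPMF α) (iterConv (shiftLaw μ) n) k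

/-- The probability generating function G(s) = E[s^X]. -/
noncomputable def pgf (μ : ℕ → ℝ≥0∞) (s : ℝ) : ℝ := ∑' k, (μ k).toReal * s ^ k

/-- The mean E[X] = ∑ k · P(X = k), valued in [0,∞]. -/
noncomputable def meanENN (μ : ℕ → ℝ≥0∞) : ℝ≥0∞ := ∑' k : ℕ, (k : ℝ≥0∞) * μ k

/-!
Write `G` for the generating function of `X`, `H` for that of `(X - 1)⁺` and `p = P(X = 0)`.
Summing the geometric number of summands gives `2G = e^{α(s-1)} + H G`, while `s H = G + p s - p`;
eliminating `H`, `φ(s) = 2G(s) - (2s + p(1-s))` satisfies `φ² = D_p(s)`, where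
`D_p(s) = (2s + p(1-s))² - 4s e^{α(s-1)}`.
As `D_p(1) = 0`, nonnegativity of `D_p` to the left of `1` forces `p ≥ 1 - α`, and then a
third-order expansion of `e^{-αt}` shows `D_p > 0` on `[0,1)` as soon as `α² + 2α ≤ 1`.
By continuity `φ = √D_p` on `[0,1)`, which bounds `(1 - G(s))/(1 - s)` and so makes `E[X]` finite.
Taking means in the equation then gives `E[X] = α + E[X] - (1 - p)`, i.e. `p = 1 - α`, and letting
`s → 1` in `2(1 - G(s))/(1 - s) = 2 - p - √D_p(s)/(1 - s)` yields `2E[X] = 1 + α - √(1 - 2α - α²)`.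
-/

open Real Set Filter
open scoped Topology

section GeneratingFunction

variable (f g : ℕ → ℝ≥0∞)

theorem tsum_convAdd : ∑' k, convAdd f g k = (∑' k, f k) * ∑' k, g k := by
  simp only [convAdd, ← Finset.Nat.sum_antidiagonal_eq_sum_range_succ fun i j ↦ f i * g j]
  rw [← ENNReal.tsum_mul_right]
  simp only [← ENNReal.tsum_mul_left]
  rw [← ENNReal.tsum_prod' (f := fun p : ℕ × ℕ ↦ f p.1 * g p.2),
    ← Finset.HasAntidiagonal.sigmaAntidiagonalEquivProd.tsum_eq, ENNReal.tsum_sigma']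
  simp [Finset.sum_attach (Finset.HasAntidiagonal.antidiagonal _) fun ij ↦ f ij.1 * g ij.2]

theorem natCast_mul_convAdd (k : ℕ) :
    k * convAdd f g k = convAdd (fun j ↦ j * f j) g k + convAdd f (fun j ↦ j * g j) k := by
  simp only [convAdd, Finset.mul_sum, ← Finset.sum_add_distrib]
  refine Finset.sum_congr rfl fun j hj ↦ ?_
  have hk : (k : ℝ≥0∞) = j + (k - j : ℕ) := by
    rw [← Nat.cast_add, Nat.add_sub_cancel' (Nat.lt_succ_iff.mp (Finset.mem_range.mp hj))]
  rw [hk]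
  ring

theorem meanENN_convAdd :
    meanENN (convAdd f g) = meanENN f * ∑' k, g k + (∑' k, f k) * meanENN g := by
  simp only [meanENN, natCast_mul_convAdd, ENNReal.tsum_add, tsum_convAdd]

noncomputable def genFun (x : ℝ≥0∞) : ℝ≥0∞ := ∑' k, f k * x ^ k

theorem genFun_one : genFun f 1 = ∑' k, f k := by
  simp [genFun]

theorem genFun_convAdd (x : ℝ≥0∞) : genFun (convAdd f g) x = genFun f x * genFun g x := by
  have h : ∀ k, convAdd f g k * x ^ k
      = convAdd (fun j ↦ f j * x ^ j) (fun j ↦ g j * x ^ j) k := fun k ↦ by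
    simp only [convAdd, Finset.sum_mul]
    refine Finset.sum_congr rfl fun j hj ↦ ?_
    rw [mul_mul_mul_comm, ← pow_add,
      Nat.add_sub_cancel' (Nat.lt_succ_iff.mp (Finset.mem_range.mp hj))]
  simp only [genFun, h, tsum_convAdd]

theorem genFun_iterConv (x : ℝ≥0∞) (n : ℕ) : genFun (iterConv f n) x = genFun f x ^ n := by
  induction n with
  | zero =>
    rw [genFun, tsum_eq_single 0 fun k hk ↦ by simp [iterConv, hk]]
    simp [iterConv]
  | succ n ih => rw [iterConv, genFun_convAdd, ih, pow_succ]

theorem tsum_iterConv (n : ℕ) : ∑' k, iterConv f n k = (∑' k, f k) ^ n := by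
  simpa only [genFun_one] using genFun_iterConv f 1 n

variable {f}

theorem meanENN_iterConv (hf : ∑' k, f k = 1) (n : ℕ) :
    meanENN (iterConv f n) = n * meanENN f := by
  induction n with
  | zero =>
    rw [meanENN, tsum_eq_single 0 fun k hk ↦ by simp [iterConv, hk]]
    simp
  | succ n ih =>
    rw [iterConv, meanENN_convAdd, ih, tsum_iterConv, hf]
    push_cast
    ring

end GeneratingFunction

section Laws

variable {α : ℝ}

theorem genFun_poissonPMF (hα : 0 ≤ α) {s : ℝ} (hs : 0 ≤ s) :
    genFun (poissonPMF α) (ENNReal.ofReal s) = ENNReal.ofReal (exp (α * (s - 1))) := by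
  have hterm : ∀ k : ℕ, poissonPMF α k * ENNReal.ofReal s ^ k
      = ENNReal.ofReal (exp (-α) * ((α * s) ^ k / k.factorial)) := fun k ↦ by
    rw [poissonPMF, ← ENNReal.ofReal_pow hs, ← ENNReal.ofReal_mul (by positivity)]
    congr 1
    ring
  rw [genFun, tsum_congr hterm, ← ENNReal.ofReal_tsum_of_nonneg (fun k ↦ by positivity)
    ((Real.summable_pow_div_factorial (α * s)).mul_left _), tsum_mul_left,
    ← congr_fun (Real.exp_eq_exp_ℝ.trans NormedSpace.exp_eq_tsum_div), ← Real.exp_add]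
  ring_nf

theorem tsum_poissonPMF (hα : 0 ≤ α) : ∑' k, poissonPMF α k = 1 := by
  simpa [genFun_one] using genFun_poissonPMF hα zero_le_one

theorem meanENN_poissonPMF (hα : 0 ≤ α) : meanENN (poissonPMF α) = ENNReal.ofReal α := by
  have hterm : ∀ k : ℕ, ((k + 1 : ℕ) : ℝ≥0∞) * poissonPMF α (k + 1)
      = ENNReal.ofReal α * poissonPMF α k := fun k ↦ by
    rw [poissonPMF, poissonPMF, ← ENNReal.ofReal_natCast, ← ENNReal.ofReal_mul (by positivity),
      ← ENNReal.ofReal_mul hα, Nat.factorial_succ]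
    congr 1
    push_cast
    field_simp
    ring
  rw [meanENN, tsum_eq_zero_add' ENNReal.summable, tsum_congr hterm, ENNReal.tsum_mul_left,
    tsum_poissonPMF hα]
  simp

theorem tsum_geomHalf : ∑' n, geomHalf n = 1 := by
  simp only [geomHalf, one_div, ENNReal.tsum_geometric_add_one, ENNReal.one_sub_inv_two, inv_inv]
  exact ENNReal.inv_mul_cancel two_ne_zero ENNReal.ofNat_ne_top

theorem meanENN_geomHalf : meanENN geomHalf = 1 := by
  have hsum : HasSum (fun n : ℕ ↦ n * (1 / 2 : ℝ) ^ (n + 1)) 1 := by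
    have h := (hasSum_coe_mul_geometric_of_norm_lt_one (r := (1 / 2 : ℝ))
      (by norm_num)).mul_right (1 / 2)
    norm_num at h ⊢
    simpa [pow_succ, mul_assoc] using h
  have hterm : ∀ n : ℕ, (n : ℝ≥0∞) * geomHalf n = ENNReal.ofReal (n * (1 / 2 : ℝ) ^ (n + 1)) :=
    fun n ↦ by
      rw [geomHalf, ENNReal.ofReal_mul (by positivity), ENNReal.ofReal_natCast,
        ENNReal.ofReal_pow (by norm_num), ENNReal.ofReal_div_of_pos two_pos]
      simp
  rw [meanENN, tsum_congr hterm, ← ENNReal.ofReal_tsum_of_nonneg (fun n ↦ by positivity)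
    hsum.summable, hsum.tsum_eq, ENNReal.ofReal_one]

theorem two_mul_genFun_geomHalf (y : ℝ≥0∞) :
    2 * genFun geomHalf y = 1 + y * genFun geomHalf y := by
  have h2 : (2 : ℝ≥0∞) * 2⁻¹ = 1 := ENNReal.mul_inv_cancel two_ne_zero ENNReal.ofNat_ne_top
  rw [genFun, ← ENNReal.tsum_mul_left, ← ENNReal.tsum_mul_left, tsum_eq_zero_add' ENNReal.summable]
  simp only [geomHalf, one_div]
  congr 1
  · simp [h2]
  · refine tsum_congr fun n ↦ ?_
    calc 2 * (2⁻¹ ^ (n + 1 + 1) * y ^ (n + 1))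
        = 2 * 2⁻¹ * (y * (2⁻¹ ^ (n + 1) * y ^ n)) := by ring
      _ = y * (2⁻¹ ^ (n + 1) * y ^ n) := by rw [h2, one_mul]

end Laws

section ShiftLaw

variable (μ : ℕ → ℝ≥0∞)

theorem tsum_shiftLaw : ∑' k, shiftLaw μ k = ∑' k, μ k := by
  rw [tsum_eq_zero_add' ENNReal.summable (f := shiftLaw μ),
    tsum_eq_zero_add' ENNReal.summable (f := μ),
    tsum_eq_zero_add' ENNReal.summable (f := fun k ↦ μ (k + 1))]
  simp [shiftLaw, add_assoc]

theorem mul_genFun_shiftLaw_add (x : ℝ≥0∞) :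
    x * genFun (shiftLaw μ) x + μ 0 = genFun μ x + μ 0 * x := by
  set T := ∑' k, μ (k + 2) * x ^ (k + 2)
  have hG : genFun μ x = μ 0 + (μ 1 * x + T) := by
    rw [genFun, tsum_eq_zero_add' ENNReal.summable, tsum_eq_zero_add' ENNReal.summable]
    simp [T]
  have hH : x * genFun (shiftLaw μ) x = (μ 0 + μ 1) * x + T := by
    rw [genFun, ← ENNReal.tsum_mul_left, tsum_eq_zero_add' ENNReal.summable]
    simp only [shiftLaw, T, if_pos, Nat.add_eq_zero_iff, one_ne_zero, and_false, if_false]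
    congr 1
    · ring
    · exact tsum_congr fun k ↦ by ring
  rw [hG, hH]
  ring

theorem meanENN_shiftLaw : meanENN (shiftLaw μ) = ∑' k, k * μ (k + 1) := by
  rw [meanENN, tsum_eq_zero_add' ENNReal.summable,
    tsum_eq_zero_add' ENNReal.summable (f := fun k : ℕ ↦ k * μ (k + 1))]
  simp [shiftLaw]

theorem meanENN_eq_meanENN_shiftLaw_add : meanENN μ = meanENN (shiftLaw μ) + ∑' k, μ (k + 1) := by
  rw [meanENN_shiftLaw, ← ENNReal.tsum_add, meanENN, tsum_eq_zero_add' ENNReal.summable]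
  simp [add_mul]

end ShiftLaw

section RealPGF

variable {μ : ℕ → ℝ≥0∞}

theorem toReal_genFun_ofReal (hμ : ∀ k, μ k ≠ ⊤) {s : ℝ} (hs : 0 ≤ s) :
    (genFun μ (ENNReal.ofReal s)).toReal = pgf μ s := by
  rw [genFun, pgf, ENNReal.tsum_toReal_eq fun k ↦ ENNReal.mul_ne_top (hμ k)
    (ENNReal.pow_ne_top ENNReal.ofReal_ne_top)]
  simp [ENNReal.toReal_ofReal hs]

theorem pgf_zero (μ : ℕ → ℝ≥0∞) : pgf μ 0 = (μ 0).toReal := by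
  rw [pgf, tsum_eq_single 0 fun k hk ↦ by simp [hk]]
  simp

theorem continuousOn_pgf (hμ : ∑' k, μ k ≠ ⊤) : ContinuousOn (pgf μ) (Icc (-1) 1) :=
  continuousOn_tsum (fun k ↦ by fun_prop) (ENNReal.summable_toReal hμ) fun k s hs ↦ by
    rw [norm_mul, norm_pow, Real.norm_of_nonneg ENNReal.toReal_nonneg]
    exact mul_le_of_le_one_right ENNReal.toReal_nonneg (pow_le_one₀ (norm_nonneg _) (abs_le.2 hs))

theorem meanENN_eq_ofReal (hμ : ∀ k, μ k ≠ ⊤)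
    (h : Summable fun k ↦ k * (μ k).toReal) :
    meanENN μ = ENNReal.ofReal (∑' k, k * (μ k).toReal) := by
  rw [ENNReal.ofReal_tsum_of_nonneg (fun k ↦ by positivity) h, meanENN]
  refine tsum_congr fun k ↦ ?_
  rw [ENNReal.ofReal_mul k.cast_nonneg, ENNReal.ofReal_natCast, ENNReal.ofReal_toReal (hμ k)]

end RealPGF

section Discriminant

theorem abs_exp_neg_sub_le {u : ℝ} (hu0 : 0 ≤ u) (hu1 : u ≤ 1) :
    |exp (-u) - (1 - u + u ^ 2 / 2)| ≤ u ^ 3 / 4 := by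
  have h := Real.exp_bound (x := -u) (by rwa [abs_neg, abs_of_nonneg hu0]) (n := 3) (by norm_num)
  norm_num [Finset.sum_range_succ, Nat.factorial, abs_of_nonneg hu0, ← sub_eq_add_neg] at h
  exact h.trans (by nlinarith [pow_nonneg hu0 3])

/-- The discriminant of the quadratic equation `g² - (2s + p(1-s)) g + s e^{α(s-1)} = 0` satisfied
by `g = G(s)` when `p = P(X = 0)`. -/
noncomputable def discr (α p s : ℝ) : ℝ := (2 * s + p * (1 - s)) ^ 2 - 4 * s * exp (α * (s - 1))

theorem discr_one_sub (α t : ℝ) :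
    discr α (1 - α) (1 - t) = (1 - 2 * α - α ^ 2) * t ^ 2 + 2 * α ^ 2 * t ^ 3
      - 4 * (1 - t) * (exp (-(α * t)) - (1 - α * t + (α * t) ^ 2 / 2)) := by
  rw [discr, show α * (1 - t - 1) = -(α * t) by ring]
  ring

theorem discr_pos {α p s : ℝ} (hα0 : 0 < α) (hα2 : α ^ 2 + 2 * α ≤ 1) (hp : 1 - α ≤ p)
    (hs0 : 0 ≤ s) (hs1 : s < 1) : 0 < discr α p s := by
  have hα1 : α < 1 := by nlinarith
  obtain ⟨t, rfl⟩ : ∃ t, s = 1 - t := ⟨1 - s, by ring⟩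
  have ht0 : 0 < t := by linarith
  have ht1 : t ≤ 1 := by linarith
  have hE := (abs_le.1 (abs_exp_neg_sub_le (u := α * t) (by positivity) (by nlinarith))).2
  have hα3 : 0 < α ^ 2 * t ^ 3 := by positivity
  have hlow : 0 < discr α (1 - α) (1 - t) := by
    rw [discr_one_sub]
    have h1 : 4 * (1 - t) * (exp (-(α * t)) - (1 - α * t + (α * t) ^ 2 / 2))
        ≤ α ^ 2 * t ^ 3 := by
      calc _ ≤ 4 * (1 - t) * ((α * t) ^ 3 / 4) := by gcongr
        _ = α * (1 - t) * (α ^ 2 * t ^ 3) := by ring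
        _ ≤ 1 * 1 * (α ^ 2 * t ^ 3) := by gcongr
        _ = _ := by ring
    nlinarith [mul_nonneg (by linarith : 0 ≤ 1 - 2 * α - α ^ 2) (sq_nonneg t)]
  -- `discr α p s` is monotone in `p` because `2s + p(1-s)` stays nonnegative
  refine hlow.trans_le ?_
  simp only [discr]
  gcongr

theorem le_of_discr_nonneg {α p : ℝ} (h : ∀ s ∈ Ioo (0 : ℝ) 1, 0 ≤ discr α p s) : 1 - α ≤ p := by
  set c := (2 - p) ^ 2 - 4 * α
  have hpos : ∀ t ∈ Ioo (0 : ℝ) 1, 0 ≤ 4 * (p - 1 + α) + t * c := by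
    intro t ⟨ht0, ht1⟩
    have hD := h (1 - t) ⟨by linarith, by linarith⟩
    have hexp := mul_le_mul_of_nonneg_left (Real.add_one_le_exp (α * (1 - t - 1)))
      (by linarith : 0 ≤ 4 * (1 - t))
    rw [discr] at hD
    have : 0 ≤ t * (4 * (p - 1 + α) + t * c) := by nlinarith
    exact nonneg_of_mul_nonneg_right (by linarith) ht0
  have hlim : Tendsto (fun t ↦ 4 * (p - 1 + α) + t * c) (𝓝[>] 0) (𝓝 (4 * (p - 1 + α))) := by
    have := (by fun_prop : Continuous fun t : ℝ ↦ 4 * (p - 1 + α) + t * c).tendsto 0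
    simpa using this.mono_left nhdsWithin_le_nhds
  have := ge_of_tendsto hlim (Filter.mem_of_superset (Ioo_mem_nhdsGT one_pos) hpos)
  linarith

theorem tendsto_discr_div_sq {α : ℝ} (hα0 : 0 ≤ α) (hα1 : α ≤ 1) :
    Tendsto (fun s ↦ discr α (1 - α) s / (1 - s) ^ 2) (𝓝[<] 1) (𝓝 (1 - 2 * α - α ^ 2)) := by
  have hlim : Tendsto (fun s : ℝ ↦ 3 * (1 - s)) (𝓝[<] 1) (𝓝 0) := by
    have := (by fun_prop : Continuous fun s : ℝ ↦ 3 * (1 - s)).tendsto 1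
    simpa using this.mono_left nhdsWithin_le_nhds
  rw [tendsto_iff_norm_sub_tendsto_zero]
  refine squeeze_zero' (Eventually.of_forall fun _ ↦ norm_nonneg _) ?_ hlim
  filter_upwards [Ioo_mem_nhdsLT zero_lt_one] with s ⟨hs0, hs1⟩
  obtain ⟨t, rfl⟩ : ∃ t, s = 1 - t := ⟨1 - s, by ring⟩
  have ht0 : 0 < t := by linarith
  have hE := abs_le.1 (abs_exp_neg_sub_le (u := α * t) (by positivity) (by nlinarith))
  have hαcube : α ^ 3 ≤ 1 := pow_le_one₀ hα0 hα1
  have hαsq : α ^ 2 ≤ 1 := pow_le_one₀ hα0 hα1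
  have hbound : |discr α (1 - α) (1 - t) - (1 - 2 * α - α ^ 2) * t ^ 2| ≤ 3 * t ^ 3 := by
    rw [discr_one_sub, abs_le]
    constructor <;> nlinarith [pow_pos ht0 3]
  rw [sub_sub_cancel, Real.norm_eq_abs,
    show discr α (1 - α) (1 - t) / t ^ 2 - (1 - 2 * α - α ^ 2)
      = (discr α (1 - α) (1 - t) - (1 - 2 * α - α ^ 2) * t ^ 2) / t ^ 2 by field_simp,
    abs_div, abs_of_pos (by positivity : (0 : ℝ) < t ^ 2), div_le_iff₀ (by positivity)]
  linarith [show 3 * t * t ^ 2 = 3 * t ^ 3 by ring]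

end Discriminant

section AbelMean

variable {a : ℕ → ℝ} {s : ℝ}

theorem summable_mul_pow_of_nonneg (ha0 : ∀ k, 0 ≤ a k) (ha : Summable a) (hs0 : 0 ≤ s)
    (hs1 : s ≤ 1) : Summable fun k ↦ a k * s ^ k :=
  ha.of_nonneg_of_le (fun k ↦ mul_nonneg (ha0 k) (pow_nonneg hs0 k))
    fun k ↦ mul_le_of_le_one_right (ha0 k) (pow_le_one₀ hs0 hs1)

theorem hasSum_mul_geom_sum (ha : Summable a) (has : Summable fun k ↦ a k * s ^ k) (hs : s ≠ 1) :
    HasSum (fun k ↦ a k * ∑ i ∈ Finset.range k, s ^ i)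
      ((∑' k, a k - ∑' k, a k * s ^ k) / (1 - s)) := by
  have h : (fun k ↦ a k * ∑ i ∈ Finset.range k, s ^ i) = fun k ↦ (a k - a k * s ^ k) / (1 - s) := by
    funext k
    rw [geom_sum_eq hs]
    field_simp [sub_ne_zero.2 hs, sub_ne_zero.2 hs.symm]
    ring
  rw [h]
  exact (ha.hasSum.sub has.hasSum).div_const _

theorem summable_natCast_mul_of_tsum_mul_geom_sum_le (ha0 : ∀ k, 0 ≤ a k) (ha : Summable a)
    {C : ℝ} (hC : ∀ s ∈ Ioo (0 : ℝ) 1, ∑' k, a k * ∑ i ∈ Finset.range k, s ^ i ≤ C) :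
    Summable fun k ↦ k * a k := by
  refine summable_of_sum_range_le (c := C) (fun k ↦ mul_nonneg k.cast_nonneg (ha0 k)) fun n ↦ ?_
  have hlim : Tendsto (fun s : ℝ ↦ ∑ k ∈ Finset.range n, a k * ∑ i ∈ Finset.range k, s ^ i)
      (𝓝[<] 1) (𝓝 (∑ k ∈ Finset.range n, k * a k)) := by
    have := (by fun_prop : Continuous fun s : ℝ ↦
      ∑ k ∈ Finset.range n, a k * ∑ i ∈ Finset.range k, s ^ i).tendsto 1
    simpa [mul_comm] using this.mono_left nhdsWithin_le_nhds
  refine le_of_tendsto hlim ?_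
  filter_upwards [Ioo_mem_nhdsLT one_pos] with s hs
  refine (Summable.sum_le_tsum _ (fun k _ ↦ ?_) ?_).trans (hC s hs)
  · exact mul_nonneg (ha0 k) (Finset.sum_nonneg fun i _ ↦ pow_nonneg hs.1.le i)
  · exact (hasSum_mul_geom_sum ha (summable_mul_pow_of_nonneg ha0 ha hs.1.le hs.2.le)
      hs.2.ne).summable

theorem tendsto_tsum_mul_geom_sum (ha0 : ∀ k, 0 ≤ a k) (hma : Summable fun k ↦ k * a k) :
    Tendsto (fun s ↦ ∑' k, a k * ∑ i ∈ Finset.range k, s ^ i) (𝓝[<] 1)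
      (𝓝 (∑' k, k * a k)) := by
  refine tendsto_tsum_of_dominated_convergence hma (fun k ↦ ?_) ?_
  · have := (by fun_prop : Continuous fun s : ℝ ↦ a k * ∑ i ∈ Finset.range k, s ^ i).tendsto 1
    simpa [mul_comm] using this.mono_left nhdsWithin_le_nhds
  · filter_upwards [Ioo_mem_nhdsLT one_pos] with s hs k
    have hsum : ∑ i ∈ Finset.range k, s ^ i ≤ k := by
      simpa using Finset.sum_le_sum fun i (_ : i ∈ Finset.range k) ↦
        pow_le_one₀ hs.1.le hs.2.le
    rw [norm_mul, Real.norm_of_nonneg (ha0 k),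
      Real.norm_of_nonneg (Finset.sum_nonneg fun i _ ↦ pow_nonneg hs.1.le i), mul_comm]
    exact mul_le_mul_of_nonneg_right hsum (ha0 k)

end AbelMean

section RDE

variable {α : ℝ} {μ : ℕ → ℝ≥0∞}

theorem SatisfiesRDE.genFun_eq (hμ : SatisfiesRDE α μ) (x : ℝ≥0∞) :
    genFun μ x = genFun (poissonPMF α) x * genFun geomHalf (genFun (shiftLaw μ) x) := by
  calc genFun μ x
      = ∑' n, geomHalf n * genFun (convAdd (poissonPMF α) (iterConv (shiftLaw μ) n)) x := by
        simp only [genFun, ← ENNReal.tsum_mul_left]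
        rw [ENNReal.tsum_comm]
        refine tsum_congr fun k ↦ ?_
        rw [hμ.2 k, ← ENNReal.tsum_mul_right]
        simp only [mul_assoc]
    _ = _ := by
        simp only [genFun_convAdd, genFun_iterConv]
        rw [genFun.eq_def geomHalf, ← ENNReal.tsum_mul_left]
        exact tsum_congr fun n ↦ by ring

theorem SatisfiesRDE.two_mul_genFun (hμ : SatisfiesRDE α μ) (x : ℝ≥0∞) :
    2 * genFun μ x = genFun (poissonPMF α) x + genFun (shiftLaw μ) x * genFun μ x := by
  rw [hμ.genFun_eq, mul_left_comm, two_mul_genFun_geomHalf]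
  ring

theorem SatisfiesRDE.genFun_quadratic (hμ : SatisfiesRDE α μ) (x : ℝ≥0∞) :
    2 * x * genFun μ x + μ 0 * genFun μ x
      = x * genFun (poissonPMF α) x + genFun μ x * genFun μ x + μ 0 * x * genFun μ x := by
  calc 2 * x * genFun μ x + μ 0 * genFun μ x
      = x * genFun (poissonPMF α) x + (x * genFun (shiftLaw μ) x + μ 0) * genFun μ x := by
        rw [mul_right_comm, hμ.two_mul_genFun]
        ring
    _ = _ := by
        rw [mul_genFun_shiftLaw_add]
        ring

theorem SatisfiesRDE.meanENN_eq (hα : 0 ≤ α) (hμ : SatisfiesRDE α μ) :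
    meanENN μ = ENNReal.ofReal α + meanENN (shiftLaw μ) := by
  have hconv : ∀ n : ℕ, meanENN (convAdd (poissonPMF α) (iterConv (shiftLaw μ) n))
      = ENNReal.ofReal α + n * meanENN (shiftLaw μ) := fun n ↦ by
    have hshift : ∑' k, shiftLaw μ k = 1 := (tsum_shiftLaw μ).trans hμ.1
    rw [meanENN_convAdd, meanENN_poissonPMF hα, tsum_poissonPMF hα, tsum_iterConv, hshift,
      meanENN_iterConv hshift]
    simp
  calc meanENN μ
      = ∑' n, geomHalf n * meanENN (convAdd (poissonPMF α) (iterConv (shiftLaw μ) n)) := by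
        simp only [meanENN, ← ENNReal.tsum_mul_left]
        rw [ENNReal.tsum_comm]
        exact tsum_congr fun k ↦ by
          rw [hμ.2 k, ← ENNReal.tsum_mul_left]
          exact tsum_congr fun n ↦ by ring
    _ = ∑' n, (geomHalf n * ENNReal.ofReal α + n * geomHalf n * meanENN (shiftLaw μ)) := by
        simp only [hconv]
        exact tsum_congr fun n ↦ by ring
    _ = _ := by
        rw [ENNReal.tsum_add, ENNReal.tsum_mul_right, ENNReal.tsum_mul_right, tsum_geomHalf,
          ← meanENN, meanENN_geomHalf, one_mul, one_mul]

theorem SatisfiesRDE.ne_top (hμ : SatisfiesRDE α μ) (k : ℕ) : μ k ≠ ⊤ :=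
  ne_top_of_le_ne_top (hμ.1 ▸ ENNReal.one_ne_top) (ENNReal.le_tsum k)

theorem SatisfiesRDE.toReal_mu_zero (hα : 0 ≤ α) (hμ : SatisfiesRDE α μ)
    (hmean : meanENN μ ≠ ⊤) : (μ 0).toReal = 1 - α := by
  have hshift : meanENN (shiftLaw μ) ≠ ⊤ :=
    ne_top_of_le_ne_top hmean ((meanENN_eq_meanENN_shiftLaw_add μ).symm ▸ le_self_add)
  have htail : ∑' k, μ (k + 1) = ENNReal.ofReal α := by
    rw [← ENNReal.add_right_inj hshift, ← meanENN_eq_meanENN_shiftLaw_add, add_comm,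
      hμ.meanENN_eq hα]
  have hmass : μ 0 + ENNReal.ofReal α = 1 := by
    rw [← htail, ← tsum_eq_zero_add' ENNReal.summable, hμ.1]
  have := congrArg ENNReal.toReal hmass
  rw [ENNReal.toReal_add (hμ.ne_top 0) ENNReal.ofReal_ne_top, ENNReal.toReal_ofReal hα,
    ENNReal.toReal_one] at this
  linarith

theorem SatisfiesRDE.sq_eq_discr (hα : 0 ≤ α) (hμ : SatisfiesRDE α μ) {s : ℝ} (hs0 : 0 ≤ s)
    (hs1 : s ≤ 1) :
    (2 * pgf μ s - (2 * s + (μ 0).toReal * (1 - s))) ^ 2 = discr α (μ 0).toReal s := by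
  set x := ENNReal.ofReal s
  have hG : genFun μ x ≠ ⊤ := by
    refine ne_top_of_le_ne_top (hμ.1 ▸ ENNReal.one_ne_top) (ENNReal.tsum_le_tsum fun k ↦ ?_)
    exact mul_le_of_le_one_right' (pow_le_one' (ENNReal.ofReal_le_one.2 hs1) k)
  have hP : genFun (poissonPMF α) x ≠ ⊤ := by
    rw [genFun_poissonPMF hα hs0]
    exact ENNReal.ofReal_ne_top
  have h := congrArg ENNReal.toReal (hμ.genFun_quadratic x)
  have h0 := hμ.ne_top 0
  rw [ENNReal.toReal_add (by finiteness) (by finiteness),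
    ENNReal.toReal_add (by finiteness) (by finiteness),
    ENNReal.toReal_add (by finiteness) (by finiteness)] at h
  simp only [ENNReal.toReal_mul, ENNReal.toReal_ofNat] at h
  rw [toReal_genFun_ofReal hμ.ne_top hs0, genFun_poissonPMF hα hs0,
    ENNReal.toReal_ofReal (exp_pos _).le, ENNReal.toReal_ofReal hs0] at h
  rw [discr]
  linear_combination (-4) * h

theorem SatisfiesRDE.two_mul_pgf_sub_eq_sqrt (hα0 : 0 < α) (hα2 : α ^ 2 + 2 * α ≤ 1)
    (hμ : SatisfiesRDE α μ) :
    EqOn (fun s ↦ 2 * pgf μ s - (2 * s + (μ 0).toReal * (1 - s)))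
      (fun s ↦ √(discr α (μ 0).toReal s)) (Ico 0 1) := by
  set p := (μ 0).toReal
  have hsq : ∀ s ∈ Icc (0 : ℝ) 1, (2 * pgf μ s - (2 * s + p * (1 - s))) ^ 2 = discr α p s :=
    fun s hs ↦ hμ.sq_eq_discr hα0.le hs.1 hs.2
  have hp : 1 - α ≤ p :=
    le_of_discr_nonneg fun s hs ↦ hsq s (Ioo_subset_Icc_self hs) ▸ sq_nonneg _
  have hD : ∀ s ∈ Ico (0 : ℝ) 1, 0 < discr α p s := fun s hs ↦ discr_pos hα0 hα2 hp hs.1 hs.2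
  have hpgf : ContinuousOn (pgf μ) (Ico 0 1) :=
    (continuousOn_pgf (hμ.1 ▸ ENNReal.one_ne_top)).mono
      (Ico_subset_Icc_self.trans (Icc_subset_Icc (by norm_num) le_rfl))
  refine isPreconnected_Ico.eq_of_sq_eq ((continuousOn_const.mul hpgf).sub (by fun_prop))
    (Continuous.continuousOn (by unfold discr; fun_prop)) (fun s hs ↦ ?_)
    (fun hs ↦ (Real.sqrt_pos.2 (hD _ hs)).ne') (left_mem_Ico.2 one_pos) ?_
  · simp [hsq s (Ico_subset_Icc_self hs), Real.sq_sqrt (hD s hs).le]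
  · have hp0 : 0 ≤ p := ENNReal.toReal_nonneg
    simp [pgf_zero, discr, Real.sqrt_sq hp0, p]
    ring

theorem SatisfiesRDE.tsum_mul_geom_sum_eq (hα0 : 0 < α) (hα2 : α ^ 2 + 2 * α ≤ 1)
    (hμ : SatisfiesRDE α μ) {s : ℝ} (hs0 : 0 ≤ s) (hs1 : s < 1) :
    ∑' k, (μ k).toReal * ∑ i ∈ Finset.range k, s ^ i
      = (2 - (μ 0).toReal - √(discr α (μ 0).toReal s) / (1 - s)) / 2 := by
  have hmass : ∑' k, (μ k).toReal = 1 := by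
    rw [← ENNReal.tsum_toReal_eq hμ.ne_top, hμ.1, ENNReal.toReal_one]
  have ha : Summable fun k ↦ (μ k).toReal := ENNReal.summable_toReal (hμ.1 ▸ ENNReal.one_ne_top)
  have hG := hμ.two_mul_pgf_sub_eq_sqrt hα0 hα2 ⟨hs0, hs1⟩
  simp only at hG
  rw [(hasSum_mul_geom_sum ha (summable_mul_pow_of_nonneg (fun _ ↦ ENNReal.toReal_nonneg) ha hs0
    hs1.le) hs1.ne).tsum_eq, hmass, ← pgf, ← hG]
  field_simp [(sub_pos.2 hs1).ne']
  ring

theorem SatisfiesRDE.summable_natCast_mul (hα0 : 0 < α) (hα2 : α ^ 2 + 2 * α ≤ 1)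
    (hμ : SatisfiesRDE α μ) : Summable fun k ↦ k * (μ k).toReal := by
  refine summable_natCast_mul_of_tsum_mul_geom_sum_le (fun _ ↦ ENNReal.toReal_nonneg)
    (ENNReal.summable_toReal (hμ.1 ▸ ENNReal.one_ne_top)) (C := (2 - (μ 0).toReal) / 2)
    fun s hs ↦ ?_
  rw [hμ.tsum_mul_geom_sum_eq hα0 hα2 hs.1.le hs.2]
  have : 0 ≤ √(discr α (μ 0).toReal s) / (1 - s) :=
    div_nonneg (Real.sqrt_nonneg _) (by linarith [hs.2])
  linarith

end RDE

/-- For 0 < α ≤ √2 − 1, any ℕ-valued random variable X satisfying the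
RDE has E[X] = (1/2)(1 + α − √(1 − 2α − α²)). -/
theorem mean_eq_small_alpha
    (α : ℝ) (hα0 : 0 < α) (hα1 : α ≤ Real.sqrt 2 - 1)
    (μ : ℕ → ℝ≥0∞) (hμ : SatisfiesRDE α μ) :
    meanENN μ = ENNReal.ofReal ((1 / 2) * (1 + α - Real.sqrt (1 - 2 * α - α ^ 2))) := by
  have hα2 : α ^ 2 + 2 * α ≤ 1 := by
    nlinarith [Real.sq_sqrt (zero_le_two : (0 : ℝ) ≤ 2), Real.sqrt_nonneg 2]
  have hsum := hμ.summable_natCast_mul hα0 hα2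
  have hmean := meanENN_eq_ofReal hμ.ne_top hsum
  have hp := hμ.toReal_mu_zero hα0.le (hmean ▸ ENNReal.ofReal_ne_top)
  rw [hmean]
  congr 1
  refine tendsto_nhds_unique (tendsto_tsum_mul_geom_sum (fun _ ↦ ENNReal.toReal_nonneg) hsum) ?_
  have hlim := (((tendsto_discr_div_sq hα0.le (by nlinarith)).sqrt).const_sub (1 + α)).div_const 2
  convert hlim.congr' ?_ using 2
  · ring
  filter_upwards [Ioo_mem_nhdsLT one_pos] with s hs
  rw [hμ.tsum_mul_geom_sum_eq hα0 hα2 hs.1.le hs.2, hp, Real.sqrt_div' _ (sq_nonneg _),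
    Real.sqrt_sq (by linarith [hs.2])]
  ring
end

section
/- Let α ∈ (0,1) and let X be an ℕ-valued random variable satisfying the recursive distributional equation. Then for every s ∈ (0,1], the probability generating function satisfies the quadratic equation G(s)² − ((2−p)s + p)·G(s) + s·exp(α(s−1)) = 0. -/
open scoped ENNReal

/-!
Write `G` and `H` for the generating functions of `X` and of `(X - 1)⁺`. Conditioning on `N`,
the right-hand side of the equation has generating function
`exp (α (s - 1)) * ∑ₙ (1/2)^(n+1) Hⁿ`, so the geometric series gives `G = ½ exp (α (s - 1)) + ½ H G`.
Moreover `s · s^(k - 1)⁺ = s^k` except at `k = 0`, whence `s H + p = G + s p`.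
Eliminating `H` between these two relations yields the quadratic equation.
-/

open Finset

lemma ENNReal.tsum_mul_tsum_eq_tsum_sum_range (f g : ℕ → ℝ≥0∞) :
    (∑' n, f n) * ∑' n, g n = ∑' n, ∑ k ∈ range (n + 1), f k * g (n - k) := by
  have hprod : (∑' n, f n) * ∑' n, g n = ∑' p : ℕ × ℕ, f p.1 * g p.2 := by
    rw [ENNReal.tsum_prod (f := fun a b => f a * g b), ← ENNReal.tsum_mul_right]
    simp_rw [ENNReal.tsum_mul_left]
  rw [hprod, ← HasAntidiagonal.sigmaAntidiagonalEquivProd.tsum_eq,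
    ENNReal.tsum_sigma']
  refine tsum_congr fun n => ?_
  rw [tsum_fintype, ← Nat.sum_antidiagonal_eq_sum_range_succ fun k l => f k * g l]
  exact sum_coe_sort (antidiagonal n) fun x => f x.1 * g x.2

/-- The generating function with values in `ℝ≥0∞`, where every series converges, so that sums can
be exchanged and multiplied without summability side conditions. -/
noncomputable def pgfENN (f : ℕ → ℝ≥0∞) (t : ℝ≥0∞) : ℝ≥0∞ := ∑' k, f k * t ^ k

lemma pgfENN_convAdd (f g : ℕ → ℝ≥0∞) (t : ℝ≥0∞) :
    pgfENN (convAdd f g) t = pgfENN f t * pgfENN g t := by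
  rw [pgfENN, pgfENN, pgfENN, ENNReal.tsum_mul_tsum_eq_tsum_sum_range]
  refine tsum_congr fun k => ?_
  rw [convAdd, sum_mul]
  refine sum_congr rfl fun j hj => ?_
  rw [← Nat.add_sub_cancel' (Nat.lt_succ_iff.mp (mem_range.mp hj)), pow_add,
    Nat.add_sub_cancel_left]
  ring

lemma pgfENN_iterConv (f : ℕ → ℝ≥0∞) (t : ℝ≥0∞) (n : ℕ) :
    pgfENN (iterConv f n) t = pgfENN f t ^ n := by
  induction n with
  | zero => simp [pgfENN, iterConv]
  | succ n ih => rw [iterConv, pgfENN_convAdd, ih, pow_succ]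

lemma pgfENN_le_tsum (f : ℕ → ℝ≥0∞) {t : ℝ≥0∞} (ht : t ≤ 1) : pgfENN f t ≤ ∑' k, f k :=
  ENNReal.tsum_le_tsum fun k => mul_le_of_le_one_right' (pow_le_one' ht k)

lemma pgfENN_eq_add_mul_pgfENN_succ (f : ℕ → ℝ≥0∞) (t : ℝ≥0∞) :
    pgfENN f t = f 0 + t * pgfENN (fun k => f (k + 1)) t := by
  rw [pgfENN, pgfENN, tsum_eq_zero_add' ENNReal.summable, ← ENNReal.tsum_mul_left]
  simp only [pow_zero, mul_one, pow_succ]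
  congr 1
  exact tsum_congr fun k => by ring

lemma pgfENN_shiftLaw (μ : ℕ → ℝ≥0∞) (t : ℝ≥0∞) :
    t * pgfENN (shiftLaw μ) t + μ 0 = pgfENN μ t + t * μ 0 := by
  rw [pgfENN_eq_add_mul_pgfENN_succ (shiftLaw μ), pgfENN_eq_add_mul_pgfENN_succ μ,
    pgfENN_eq_add_mul_pgfENN_succ (fun k => μ (k + 1))]
  simp only [shiftLaw, if_pos, Nat.add_one_ne_zero, if_false]
  ring

lemma pgfENN_poissonPMF {α s : ℝ} (hα : 0 ≤ α) (hs : 0 ≤ s) :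
    pgfENN (poissonPMF α) (ENNReal.ofReal s) = ENNReal.ofReal (Real.exp (α * (s - 1))) := by
  have hterm : ∀ k : ℕ, poissonPMF α k * ENNReal.ofReal s ^ k
      = ENNReal.ofReal (Real.exp (-α) * ((α * s) ^ k / k.factorial)) := fun k => by
    rw [poissonPMF, ← ENNReal.ofReal_pow hs, ← ENNReal.ofReal_mul (by positivity), mul_pow]
    ring_nf
  have hsum : HasSum (fun k : ℕ => Real.exp (-α) * ((α * s) ^ k / k.factorial))
      (Real.exp (α * (s - 1))) := by
    have h := (NormedSpace.expSeries_div_hasSum_exp (α * s)).mul_left (Real.exp (-α))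
    rw [← Real.exp_eq_exp_ℝ, ← Real.exp_add] at h
    rwa [show α * (s - 1) = -α + α * s by ring]
  rw [pgfENN, tsum_congr hterm, ← ENNReal.ofReal_tsum_of_nonneg (fun k => by positivity)
    hsum.summable, hsum.tsum_eq]

lemma tsum_geomHalf_mul_pow (c x : ℝ≥0∞) :
    ∑' n, geomHalf n * (c * x ^ n) = 2⁻¹ * c + 2⁻¹ * x * ∑' n, geomHalf n * (c * x ^ n) := by
  conv_lhs => rw [tsum_eq_zero_add' ENNReal.summable]
  rw [← ENNReal.tsum_mul_left]
  simp only [geomHalf, one_div, pow_succ, pow_zero, one_mul, mul_one]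
  congr 1
  exact tsum_congr fun n => by ring

lemma SatisfiesRDE.pgfENN_eq_tsum {α : ℝ} {μ : ℕ → ℝ≥0∞} (hμ : SatisfiesRDE α μ)
    (t : ℝ≥0∞) :
    pgfENN μ t = ∑' n, geomHalf n * (pgfENN (poissonPMF α) t * pgfENN (shiftLaw μ) t ^ n) := by
  calc pgfENN μ t
      = ∑' k, ∑' n, geomHalf n * (convAdd (poissonPMF α) (iterConv (shiftLaw μ) n) k * t ^ k) := by
        refine tsum_congr fun k => ?_
        simp_rw [hμ.2 k, ← mul_assoc]
        exact ENNReal.tsum_mul_right.symm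
    _ = ∑' n, geomHalf n * pgfENN (convAdd (poissonPMF α) (iterConv (shiftLaw μ) n)) t := by
        rw [ENNReal.tsum_comm]
        exact tsum_congr fun n => ENNReal.tsum_mul_left
    _ = _ := by simp_rw [pgfENN_convAdd, pgfENN_iterConv]

lemma SatisfiesRDE.pgfENN_eq {α : ℝ} {μ : ℕ → ℝ≥0∞} (hμ : SatisfiesRDE α μ) (t : ℝ≥0∞) :
    pgfENN μ t = 2⁻¹ * pgfENN (poissonPMF α) t + 2⁻¹ * pgfENN (shiftLaw μ) t * pgfENN μ t := by
  rw [hμ.pgfENN_eq_tsum]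
  exact tsum_geomHalf_mul_pow _ _

lemma pgfENN_ne_top {f : ℕ → ℝ≥0∞} (hf : ∑' k, f k ≠ ∞) {t : ℝ≥0∞} (ht : t ≤ 1) :
    pgfENN f t ≠ ∞ :=
  ne_top_of_le_ne_top hf (pgfENN_le_tsum f ht)

lemma shiftLaw_ne_top {μ : ℕ → ℝ≥0∞} (hμ : ∀ k, μ k ≠ ∞) (k : ℕ) : shiftLaw μ k ≠ ∞ := by
  unfold shiftLaw
  split_ifs
  · exact ENNReal.add_ne_top.2 ⟨hμ 0, hμ 1⟩
  · exact hμ _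

lemma pgf_eq_toReal_pgfENN {f : ℕ → ℝ≥0∞} (hf : ∀ k, f k ≠ ∞) {s : ℝ} (hs : 0 ≤ s) :
    pgf f s = (pgfENN f (ENNReal.ofReal s)).toReal := by
  rw [pgfENN, ENNReal.tsum_toReal_eq fun k => ENNReal.mul_ne_top (hf k) (by finiteness)]
  simp only [ENNReal.toReal_mul, ENNReal.toReal_pow, ENNReal.toReal_ofReal hs, pgf]

lemma pgf_shiftLaw {μ : ℕ → ℝ≥0∞} (hμ : ∑' k, μ k ≠ ∞) {s : ℝ} (hs0 : 0 ≤ s) (hs1 : s ≤ 1) :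
    s * pgf (shiftLaw μ) s + (μ 0).toReal = pgf μ s + s * (μ 0).toReal := by
  have hfin := ENNReal.ne_top_of_tsum_ne_top hμ
  have key := pgfENN_shiftLaw μ (ENNReal.ofReal s)
  have hrhs : pgfENN μ (ENNReal.ofReal s) + ENNReal.ofReal s * μ 0 ≠ ∞ :=
    ENNReal.add_ne_top.2 ⟨pgfENN_ne_top hμ (ENNReal.ofReal_le_one.2 hs1),
      ENNReal.mul_ne_top ENNReal.ofReal_ne_top (hfin 0)⟩
  have hlhs := key ▸ hrhs
  rw [ENNReal.add_ne_top] at hlhs hrhs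
  have hreal := congrArg ENNReal.toReal key
  rwa [ENNReal.toReal_add hlhs.1 hlhs.2, ENNReal.toReal_add hrhs.1 hrhs.2, ENNReal.toReal_mul,
    ENNReal.toReal_mul, ENNReal.toReal_ofReal hs0, ← pgf_eq_toReal_pgfENN hfin hs0,
    ← pgf_eq_toReal_pgfENN (shiftLaw_ne_top hfin) hs0] at hreal

lemma SatisfiesRDE.pgf_eq {α : ℝ} {μ : ℕ → ℝ≥0∞} (hμ : SatisfiesRDE α μ) (hα : 0 ≤ α) {s : ℝ}
    (hs0 : 0 ≤ s) (hs1 : s ≤ 1) :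
    pgf μ s = 2⁻¹ * Real.exp (α * (s - 1)) + 2⁻¹ * pgf (shiftLaw μ) s * pgf μ s := by
  have hμ_ne_top : ∑' k, μ k ≠ ∞ := hμ.1 ▸ ENNReal.one_ne_top
  have hfin := ENNReal.ne_top_of_tsum_ne_top hμ_ne_top
  have key := hμ.pgfENN_eq (ENNReal.ofReal s)
  have hsum := key ▸ pgfENN_ne_top hμ_ne_top (ENNReal.ofReal_le_one.2 hs1)
  rw [ENNReal.add_ne_top] at hsum
  have hreal := congrArg ENNReal.toReal key
  rwa [ENNReal.toReal_add hsum.1 hsum.2, ENNReal.toReal_mul, ENNReal.toReal_mul,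
    ENNReal.toReal_mul, pgfENN_poissonPMF hα hs0, ENNReal.toReal_ofReal (Real.exp_nonneg _),
    ENNReal.toReal_inv, ENNReal.toReal_ofNat, ← pgf_eq_toReal_pgfENN hfin hs0,
    ← pgf_eq_toReal_pgfENN (shiftLaw_ne_top hfin) hs0] at hreal

theorem pgf_quadratic_equation_general
    (α : ℝ) (hα0 : 0 < α)
    (μ : ℕ → ℝ≥0∞) (hμ : SatisfiesRDE α μ)
    (p : ℝ) (hp : p = (μ 0).toReal) :
    ∀ s ∈ Set.Ioc (0 : ℝ) 1,
      (pgf μ s) ^ 2 - ((2 - p) * s + p) * pgf μ s + s * Real.exp (α * (s - 1)) = 0 := by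
  rintro s ⟨hs0, hs1⟩
  have hfix := hμ.pgf_eq hα0.le hs0.le hs1
  have hshift := pgf_shiftLaw (hμ.1 ▸ ENNReal.one_ne_top) hs0.le hs1
  rw [← hp] at hshift
  linear_combination (-2 * s) * hfix - pgf μ s * hshift

/-- For α ∈ (0,1) and s ∈ (0,1], the pgf satisfies
G(s)² − ((2−p)s + p)·G(s) + s·exp(α(s−1)) = 0. -/
theorem pgf_quadratic_equation
    (α : ℝ) (hα0 : 0 < α) (hα1 : α < 1)
    (μ : ℕ → ℝ≥0∞) (hμ : SatisfiesRDE α μ)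
    (p : ℝ) (hp : p = (μ 0).toReal) :
    ∀ s ∈ Set.Ioc (0 : ℝ) 1,
      (pgf μ s) ^ 2 - ((2 - p) * s + p) * pgf μ s + s * Real.exp (α * (s - 1)) = 0 :=
  pgf_quadratic_equation_general α hα0 μ hμ p hp
end
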